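/- For n ∈ ℤ define φₙ : ℝ → ℂ by φₙ(y) = (1 + iy)ⁿ/(1 − iy)^{n+1}. Then for every x ∈ ℝ the principal value PV∫_ℝ φₙ(y)/(x−y) dy exists and equals −iπ·φₙ(x) if n ≥ 0, and equals +iπ·φₙ(x) if n ≤ −1. (Equivalently, the φₙ are eigenfunctions of the Hilbert transform.) -/

import Mathlib

open MeasureTheory Filter Set Topology

/-- The rational basis functions `φₙ(y) = (1 + iy)ⁿ/(1 − iy)^{n+1}`. -/
noncomputable def phi (n : ℤ) (y : ℝ) : ℂ :=
  (1 + Complex.I * (y : ℂ)) ^ n / (1 - Complex.I * (y : ℂ)) ^ (n + 1)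

/-!
For `m ≥ 0` write `W(y) = (1 + iy)/(1 - iy)`, so that `φₘ(y) = W(y)ᵐ/(1 - iy)`. Factoring
`W(y)ᵐ - W(x)ᵐ` through `W(y) - W(x) = 2i(y - x)/((1 - iy)(1 - ix))` and using `W' = 2i/(1 - iy)²`
splits `φₘ(y)/(x - y)` into `φₘ(x)·(1/(x - y) - i/(1 - iy))` plus the derivative of a polynomial
in `W(y)`. The first term has the primitive `log(1 - iy) - log|y - x|`: its singularity at `x` is
symmetric and its limits at `±∞` are `∓iπ/2`, so it contributes `-iπ φₘ(x)` to the principal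
value. The second contributes nothing, because `W(y) → -1` at both ends. The case `n ≤ -1`
follows by conjugation, since `φ₋ₙ₋₁ = conj φₙ`.
-/

open Complex ComplexConjugate Bornology
open scoped Real

lemma ContinuousAt.tendsto_sub_sub_add {E : Type*} [TopologicalSpace E] [AddGroup E]
    [ContinuousSub E] {g : ℝ → E} {x : ℝ} (hg : ContinuousAt g x) :
    Tendsto (fun ε => g (x - ε) - g (x + ε)) (𝓝 0) (𝓝 0) := by
  have h : ContinuousAt (fun ε => g (x - ε) - g (x + ε)) 0 :=
    (hg.comp_of_eq (by fun_prop) (sub_zero x)).sub (hg.comp_of_eq (by fun_prop) (add_zero x))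
  simpa using h.tendsto

section PrincipalValue

variable {E : Type*} [NormedAddCommGroup E] [NormedSpace ℝ E] [CompleteSpace E]

lemma setOf_lt_abs_sub_eq (x ε : ℝ) : {y : ℝ | ε < |y - x|} = Iio (x - ε) ∪ Ioi (x + ε) := by
  ext y
  simp only [mem_ofPred_eq, mem_union, mem_Iio, mem_Ioi, lt_abs]
  constructor <;> rintro (h | h) <;> [right; left; right; left] <;> linarith

theorem setIntegral_lt_abs_sub_eq_of_hasDerivAt {f F : ℝ → E} {x ε : ℝ} {a b : E} (hε : 0 < ε)
    (hF : ∀ y ≠ x, HasDerivAt F (f y) y) (hf : IntegrableOn f {y | ε ≤ |y - x|})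
    (hbot : Tendsto F atBot (𝓝 a)) (htop : Tendsto F atTop (𝓝 b)) :
    ∫ y in {y | ε < |y - x|}, f y = b - a + (F (x - ε) - F (x + ε)) := by
  have hIic : Iic (x - ε) ⊆ {y | ε ≤ |y - x|} := fun y (hy : y ≤ x - ε) => by
    rw [mem_ofPred_eq, abs_of_neg (by linarith)]; linarith
  have hIoi : Ioi (x + ε) ⊆ {y | ε ≤ |y - x|} := fun y (hy : x + ε < y) => by
    rw [mem_ofPred_eq, abs_of_pos (by linarith)]; linarith
  have hleft : ∫ y in Iio (x - ε), f y = F (x - ε) - a := by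
    rw [← integral_Iic_eq_integral_Iio]
    exact integral_Iic_of_hasDerivAt_of_tendsto
      (hF _ (by linarith)).continuousAt.continuousWithinAt
      (fun y (hy : y < x - ε) => hF y (by linarith)) (hf.mono_set hIic) hbot
  have hright : ∫ y in Ioi (x + ε), f y = b - F (x + ε) :=
    integral_Ioi_of_hasDerivAt_of_tendsto
      (hF _ (by linarith)).continuousAt.continuousWithinAt
      (fun y (hy : x + ε < y) => hF y (by linarith)) (hf.mono_set hIoi) htop
  have hdisj : Disjoint (Iio (x - ε)) (Ioi (x + ε)) :=
    Iio_disjoint_Ioi_of_le (by linarith)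
  rw [setOf_lt_abs_sub_eq, setIntegral_union hdisj measurableSet_Ioi
    ((hf.mono_set hIic).mono_set Iio_subset_Iic_self) (hf.mono_set hIoi), hleft, hright]
  abel

theorem tendsto_setIntegral_lt_abs_sub_of_hasDerivAt {f F : ℝ → E} {x : ℝ} {a b : E}
    (hF : ∀ y ≠ x, HasDerivAt F (f y) y) (hf : ∀ ε > 0, IntegrableOn f {y | ε ≤ |y - x|})
    (hbot : Tendsto F atBot (𝓝 a)) (htop : Tendsto F atTop (𝓝 b))
    (hsymm : Tendsto (fun ε => F (x - ε) - F (x + ε)) (𝓝[>] 0) (𝓝 0)) :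
    Tendsto (fun ε => ∫ y in {y | ε < |y - x|}, f y) (𝓝[>] 0) (𝓝 (b - a)) := by
  have hlim : Tendsto (fun ε => b - a + (F (x - ε) - F (x + ε))) (𝓝[>] 0) (𝓝 (b - a)) := by
    simpa using hsymm.const_add (b - a)
  refine hlim.congr' ?_
  filter_upwards [self_mem_nhdsWithin] with ε (hε : 0 < ε)
  exact (setIntegral_lt_abs_sub_eq_of_hasDerivAt hε hF (hf ε hε) hbot htop).symm

end PrincipalValue

lemma tendsto_add_mul_div_add_mul_cobounded (a b c : ℂ) {d : ℂ} (hd : d ≠ 0) :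
    Tendsto (fun y : ℝ => (a + b * y) / (c + d * y)) (cobounded ℝ) (𝓝 (b / d)) := by
  have hinv : Tendsto (fun y : ℝ => ((y⁻¹ : ℝ) : ℂ)) (cobounded ℝ) (𝓝 0) := by
    simpa only [Function.comp_def, ofReal_zero] using
      (continuous_ofReal.tendsto 0).comp tendsto_inv₀_cobounded
  have hlim : Tendsto (fun y : ℝ => (a * (y⁻¹ : ℝ) + b) / (c * (y⁻¹ : ℝ) + d)) (cobounded ℝ)
      (𝓝 (b / d)) := by
    simpa only [Pi.div_def, mul_zero, zero_add] using
      ((hinv.const_mul a).add_const b).div ((hinv.const_mul c).add_const d) (by simpa)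
  refine hlim.congr' ?_
  filter_upwards [eventually_ne_cobounded 0] with y hy
  have hy' : (y : ℂ) ≠ 0 := ofReal_ne_zero.mpr hy
  rw [ofReal_inv, ← mul_div_mul_right _ _ hy']
  congr 1 <;> field_simp

lemma one_sub_I_mul_mem_slitPlane (y : ℝ) : 1 - I * y ∈ slitPlane :=
  mem_slitPlane_iff.2 (Or.inl (by simp))

lemma one_sub_I_mul_ne_zero (y : ℝ) : 1 - I * y ≠ 0 :=
  slitPlane_ne_zero (one_sub_I_mul_mem_slitPlane y)

lemma conj_one_sub_I_mul (y : ℝ) : conj (1 - I * y) = 1 + I * y := by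
  simp

lemma conj_one_add_I_mul (y : ℝ) : conj (1 + I * y) = 1 - I * y := by
  simp [sub_eq_add_neg]

lemma one_add_I_mul_ne_zero (y : ℝ) : 1 + I * y ≠ 0 := by
  rw [← conj_one_sub_I_mul]
  exact (map_ne_zero _).2 (one_sub_I_mul_ne_zero y)

lemma continuous_phi (n : ℤ) : Continuous (phi n) :=
  Continuous.div ((by fun_prop : Continuous fun y : ℝ => 1 + I * y).zpow₀ n
      fun y => Or.inl (one_add_I_mul_ne_zero y))
    ((by fun_prop : Continuous fun y : ℝ => 1 - I * y).zpow₀ (n + 1)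
      fun y => Or.inl (one_sub_I_mul_ne_zero y))
    fun y => zpow_ne_zero _ (one_sub_I_mul_ne_zero y)

lemma norm_one_sub_I_mul_sq (y : ℝ) : ‖1 - I * y‖ ^ 2 = 1 + y ^ 2 := by
  rw [← normSq_eq_norm_sq, show 1 - I * y = (1 : ℝ) + (-y : ℝ) * I by push_cast; ring,
    normSq_add_mul_I]
  ring

lemma norm_phi (n : ℤ) (y : ℝ) : ‖phi n y‖ = ‖1 - I * y‖⁻¹ := by
  have h : ‖1 + I * y‖ = ‖1 - I * y‖ := by rw [← conj_one_sub_I_mul, norm_conj]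
  have h0 : ‖1 - I * y‖ ≠ 0 := norm_ne_zero_iff.mpr (one_sub_I_mul_ne_zero y)
  rw [phi, norm_div, norm_zpow, norm_zpow, h, zpow_add_one₀ h0,
    div_mul_cancel_left₀ (zpow_ne_zero n h0)]

lemma phi_neg_sub_one (n : ℤ) (y : ℝ) : phi (-n - 1) y = conj (phi n y) := by
  unfold phi
  rw [map_div₀, map_zpow₀, map_zpow₀, conj_one_add_I_mul, conj_one_sub_I_mul,
    sub_add_cancel, show -n - 1 = -(n + 1) by ring, zpow_neg, zpow_neg, inv_div_inv]

noncomputable def cayley (y : ℝ) : ℂ := (1 + I * y) / (1 - I * y)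

lemma phi_natCast (m : ℕ) (y : ℝ) : phi m y = cayley y ^ m / (1 - I * y) := by
  rw [phi, cayley, div_pow, zpow_add_one₀ (one_sub_I_mul_ne_zero y), zpow_natCast, zpow_natCast,
    div_div]

lemma continuous_cayley : Continuous cayley :=
  Continuous.div (by fun_prop) (by fun_prop) one_sub_I_mul_ne_zero

lemma hasDerivAt_cayley (y : ℝ) : HasDerivAt cayley (2 * I / (1 - I * y) ^ 2) y := by
  have hy : HasDerivAt (fun y : ℝ => I * y) I y := by
    simpa using (hasDerivAt_id y).ofReal_comp.const_mul I
  have h := (hy.const_add 1).fun_div (hy.const_sub 1) (one_sub_I_mul_ne_zero y)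
  exact h.congr_deriv (by ring)

lemma cayley_sub_cayley (x y : ℝ) :
    cayley y - cayley x = 2 * I * (y - x) / ((1 - I * y) * (1 - I * x)) := by
  have := one_sub_I_mul_ne_zero x
  have := one_sub_I_mul_ne_zero y
  rw [cayley, cayley, div_sub_div _ _ ‹_› ‹_›]
  congr 1; ring

lemma tendsto_cayley_cobounded : Tendsto cayley (cobounded ℝ) (𝓝 (-1)) := by
  convert tendsto_add_mul_div_add_mul_cobounded 1 I 1 (neg_ne_zero.2 I_ne_zero) using 1
  · ext y; rw [cayley, neg_mul, ← sub_eq_add_neg]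
  · rw [div_neg, div_self I_ne_zero]

noncomputable def geomPrimitive (c : ℂ) (m : ℕ) (w : ℂ) : ℂ :=
  ∑ i ∈ Finset.range m, w ^ (i + 1) / (i + 1) * c ^ (m - 1 - i)

lemma continuous_geomPrimitive (c : ℂ) (m : ℕ) : Continuous (geomPrimitive c m) := by
  unfold geomPrimitive; fun_prop

lemma hasDerivAt_geomPrimitive (c : ℂ) (m : ℕ) (w : ℂ) :
    HasDerivAt (geomPrimitive c m) (∑ i ∈ Finset.range m, w ^ i * c ^ (m - 1 - i)) w := by
  refine HasDerivAt.fun_sum fun i _ => ?_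
  have hi : (i + 1 : ℂ) ≠ 0 := Nat.cast_add_one_ne_zero i
  refine (((hasDerivAt_pow (i + 1) w).div_const (i + 1 : ℂ)).mul_const _).congr_deriv ?_
  rw [add_tsub_cancel_right, Nat.cast_add_one, mul_div_cancel_left₀ _ hi]

noncomputable def kernelPrimitive (x y : ℝ) : ℂ := log (1 - I * y) - Real.log |y - x|

lemma hasDerivAt_kernelPrimitive {x y : ℝ} (hxy : y ≠ x) :
    HasDerivAt (kernelPrimitive x) (1 / (x - y) - I / (1 - I * y)) y := by
  have hlog : HasDerivAt (fun y : ℝ => log (1 - I * y)) (-I / (1 - I * y)) y := by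
    have h : HasDerivAt (fun y : ℝ => 1 - I * y) (-I) y := by
      simpa using ((hasDerivAt_id y).ofReal_comp.const_mul I).const_sub 1
    exact h.clog_real (one_sub_I_mul_mem_slitPlane y)
  have habs : HasDerivAt (fun y : ℝ => Real.log |y - x|) (y - x)⁻¹ y := by
    simp_rw [Real.log_abs]
    simpa using ((hasDerivAt_id y).sub_const x).log (sub_ne_zero.2 hxy)
  have hxy' : (x : ℂ) - y ≠ 0 := sub_ne_zero.2 (ofReal_injective.ne hxy.symm)
  have hyx' : (y : ℂ) - x ≠ 0 := sub_ne_zero.2 (ofReal_injective.ne hxy)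
  have := one_sub_I_mul_ne_zero y
  refine (hlog.sub habs.ofReal_comp).congr_deriv ?_
  rw [ofReal_inv, ofReal_sub]
  field_simp
  ring

lemma kernelPrimitive_eq_log {x y : ℝ} (hxy : y ≠ x) :
    kernelPrimitive x y = log ((1 - I * y) / |y - x|) := by
  have hpos : 0 < |y - x|⁻¹ := inv_pos.2 (abs_pos.2 (sub_ne_zero.2 hxy))
  rw [div_eq_inv_mul, ← ofReal_inv, log_ofReal_mul hpos (one_sub_I_mul_ne_zero y), Real.log_inv,
    kernelPrimitive, ofReal_neg, neg_add_eq_sub]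

lemma tendsto_one_sub_I_mul_div_sub (x : ℝ) :
    Tendsto (fun y : ℝ => (1 - I * y) / (y - x)) (cobounded ℝ) (𝓝 (-I)) := by
  convert tendsto_add_mul_div_add_mul_cobounded 1 (-I) (-x) one_ne_zero using 1
  · ext y; ring
  · rw [div_one]

lemma tendsto_kernelPrimitive_atTop (x : ℝ) :
    Tendsto (kernelPrimitive x) atTop (𝓝 (-(π / 2) * I)) := by
  have h := (tendsto_one_sub_I_mul_div_sub x).mono_left IsOrderBornology.atTop_le_cobounded
  rw [← log_neg_I]
  refine ((continuousAt_clog (by simp [mem_slitPlane_iff])).tendsto.comp h).congr' ?_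
  filter_upwards [eventually_gt_atTop x] with y hy
  rw [kernelPrimitive_eq_log hy.ne', abs_of_pos (sub_pos.2 hy), Function.comp_apply, ofReal_sub]

lemma tendsto_kernelPrimitive_atBot (x : ℝ) :
    Tendsto (kernelPrimitive x) atBot (𝓝 (π / 2 * I)) := by
  have h := ((tendsto_one_sub_I_mul_div_sub x).mono_left IsOrderBornology.atBot_le_cobounded).neg
  rw [neg_neg] at h
  rw [← log_I]
  refine ((continuousAt_clog (by simp [mem_slitPlane_iff])).tendsto.comp h).congr' ?_
  filter_upwards [eventually_lt_atBot x] with y hy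
  rw [kernelPrimitive_eq_log hy.ne, abs_of_neg (sub_neg.2 hy), Function.comp_apply, ofReal_neg,
    ofReal_sub, div_neg]

lemma phi_natCast_div_sub {x y : ℝ} (m : ℕ) (hxy : y ≠ x) :
    phi m y / (x - y) = phi m x * (1 / (x - y) - I / (1 - I * y)) -
      (1 - I * x)⁻¹ * ((∑ i ∈ Finset.range m, cayley y ^ i * cayley x ^ (m - 1 - i)) *
        (2 * I / (1 - I * y) ^ 2)) := by
  have hgeom : cayley y ^ m = cayley x ^ m +
      (∑ i ∈ Finset.range m, cayley y ^ i * cayley x ^ (m - 1 - i)) *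
        (2 * I * (y - x) / ((1 - I * y) * (1 - I * x))) := by
    rw [← cayley_sub_cayley, geom_sum₂_mul, add_sub_cancel]
  have hxy' : (x : ℂ) - y ≠ 0 := sub_ne_zero.2 (ofReal_injective.ne hxy.symm)
  have := one_sub_I_mul_ne_zero x
  have := one_sub_I_mul_ne_zero y
  rw [phi_natCast, phi_natCast, hgeom]
  generalize cayley x ^ m = a
  generalize ∑ i ∈ Finset.range m, cayley y ^ i * cayley x ^ (m - 1 - i) = s
  field_simp
  ring

noncomputable def phiPrimitive (x : ℝ) (m : ℕ) (y : ℝ) : ℂ :=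
  phi m x * kernelPrimitive x y - (1 - I * x)⁻¹ * geomPrimitive (cayley x) m (cayley y)

lemma hasDerivAt_phiPrimitive {x y : ℝ} (m : ℕ) (hxy : y ≠ x) :
    HasDerivAt (phiPrimitive x m) (phi m y / (x - y)) y := by
  rw [phi_natCast_div_sub m hxy]
  exact ((hasDerivAt_kernelPrimitive hxy).const_mul _).sub
    (((hasDerivAt_geomPrimitive _ m _).comp y (hasDerivAt_cayley y)).const_mul _)

lemma tendsto_phiPrimitive {x : ℝ} {m : ℕ} {l : Filter ℝ} {c : ℂ}
    (hK : Tendsto (kernelPrimitive x) l (𝓝 c)) (hW : Tendsto cayley l (𝓝 (-1))) :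
    Tendsto (phiPrimitive x m) l
      (𝓝 (phi m x * c - (1 - I * x)⁻¹ * geomPrimitive (cayley x) m (-1))) :=
  (hK.const_mul _).sub (((continuous_geomPrimitive _ m).tendsto _).comp hW |>.const_mul _)

lemma tendsto_phiPrimitive_sub_sub (x : ℝ) (m : ℕ) :
    Tendsto (fun ε => phiPrimitive x m (x - ε) - phiPrimitive x m (x + ε)) (𝓝 0) (𝓝 0) := by
  set g : ℝ → ℂ := fun y =>
    phi m x * log (1 - I * y) - (1 - I * x)⁻¹ * geomPrimitive (cayley x) m (cayley y)
  have hG := continuous_geomPrimitive (cayley x) m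
  have hW := continuous_cayley
  have hg : ContinuousAt g x := by
    fun_prop (disch := exact one_sub_I_mul_mem_slitPlane x)
  convert hg.tendsto_sub_sub_add using 2 with ε
  -- the singular terms `log |∓ε|` cancel
  simp only [phiPrimitive, kernelPrimitive, g, sub_sub_cancel_left, add_sub_cancel_left, abs_neg]
  ring

lemma integrableOn_phi_div_sub (n : ℤ) (x : ℝ) {ε : ℝ} (hε : 0 < ε) :
    IntegrableOn (fun y => phi n y / (x - y)) {y | ε ≤ |y - x|} := by
  have hmeas : MeasurableSet {y : ℝ | ε ≤ |y - x|} :=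
    measurableSet_le measurable_const (by fun_prop)
  set C := ‖1 - I * x‖ / ε + 1
  refine (integrable_inv_one_add_sq.const_mul C).integrableOn.mono' ?_ ?_
  · exact ((continuous_phi n).measurable.div (by fun_prop)).aestronglyMeasurable
  refine (ae_restrict_mem hmeas).mono fun y (hy : ε ≤ |y - x|) => ?_
  have ha : 0 < ‖1 - I * y‖ := norm_pos_iff.2 (one_sub_I_mul_ne_zero y)
  have hd : 0 < |y - x| := hε.trans_le hy
  have hnorm : ‖(x : ℂ) - y‖ = |y - x| := by
    rw [← ofReal_sub, norm_real, Real.norm_eq_abs, abs_sub_comm]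
  have hx : ‖1 - I * x‖ ≤ ‖1 - I * x‖ / ε * |y - x| := by
    rw [div_mul_eq_mul_div, le_div_iff₀ hε]
    exact mul_le_mul_of_nonneg_left hy (norm_nonneg _)
  have htri : ‖1 - I * y‖ ≤ C * |y - x| := calc
    ‖1 - I * y‖ = ‖(1 - I * x) - I * ((y - x : ℝ) : ℂ)‖ := by congr 1; push_cast; ring
    _ ≤ ‖1 - I * x‖ + |y - x| := (norm_sub_le _ _).trans_eq
      (by rw [norm_mul, norm_I, one_mul, norm_real, Real.norm_eq_abs])
    _ ≤ C * |y - x| := by linarith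
  rw [norm_div, norm_phi, hnorm, ← norm_one_sub_I_mul_sq]
  field_simp
  linarith

theorem tendsto_pv_phi_natCast (m : ℕ) (x : ℝ) :
    Tendsto (fun ε : ℝ => ∫ y in {y : ℝ | ε < |y - x|}, phi m y / (x - y)) (𝓝[>] 0)
      (𝓝 (-I * π * phi m x)) := by
  have h := tendsto_setIntegral_lt_abs_sub_of_hasDerivAt (fun y hy => hasDerivAt_phiPrimitive m hy)
    (fun ε hε => integrableOn_phi_div_sub m x hε)
    (tendsto_phiPrimitive (tendsto_kernelPrimitive_atBot x)
      (tendsto_cayley_cobounded.mono_left IsOrderBornology.atBot_le_cobounded))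
    (tendsto_phiPrimitive (tendsto_kernelPrimitive_atTop x)
      (tendsto_cayley_cobounded.mono_left IsOrderBornology.atTop_le_cobounded))
    ((tendsto_phiPrimitive_sub_sub x m).mono_left nhdsWithin_le_nhds)
  convert h using 2
  ring

/-- For every `n ∈ ℤ` and `x ∈ ℝ`, the principal value
`PV∫_ℝ φₙ(y)/(x−y) dy` exists and equals `−iπ·φₙ(x)` if `n ≥ 0` and `+iπ·φₙ(x)`
if `n ≤ −1`: the `φₙ` are eigenfunctions of the Hilbert transform. -/
theorem pv_phi_eigenfunction (n : ℤ) (x : ℝ) :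
    Tendsto
      (fun ε : ℝ => ∫ y in {y : ℝ | ε < |y - x|}, phi n y / ((x : ℂ) - (y : ℂ)))
      (𝓝[>] 0)
      (𝓝 (if 0 ≤ n then -Complex.I * (Real.pi : ℂ) * phi n x
        else Complex.I * (Real.pi : ℂ) * phi n x)) := by
  rcases le_or_gt 0 n with hn | hn
  · lift n to ℕ using hn
    simpa using tendsto_pv_phi_natCast n x
  · obtain ⟨m, rfl⟩ : ∃ m : ℕ, n = -m - 1 := ⟨(-n - 1).toNat, by omega⟩
    rw [if_neg (by omega)]
    convert (continuous_conj.tendsto _).comp (tendsto_pv_phi_natCast m x) using 2 with ε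
    · simp [← integral_conj, phi_neg_sub_one]
    · simp [phi_neg_sub_one]
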